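/- arXiv:1110.6255 — 5 statements merged into one kernel-verified Lean document; each statement's English description precedes it below -/
import Mathlib

section
/- The probability that the number measurement on a quantum Gaussian state ρ_{θ,N} yields outcome k is P_{θ,N}(k) = (1/(N+1)) (N/(N+1))^k e^{-|θ|²/(N+1)} L_k(-|θ|²/(N(N+1))), where L_k is the k-th Laguerre polynomial. Equivalently (as a Gaussian-mixture integral identity): (1/(π k! N)) ∫_{ℂ} |ξ|^{2k} e^{-|ξ|²} e^{-|θ-ξ|²/N} dξ equals the right-hand side above, for all θ ∈ ℂ, N > 0, k ∈ ℕ. -/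
/-!
Completing the square, `‖ξ‖² + ‖θ - ξ‖² / N = a ‖ξ - c‖² + ‖θ‖² / (N + 1)` with `a = (N + 1) / N`
and `c = θ / (N + 1)`, reduces the integral to the moment `∫ ‖w + c‖^(2k) e^{-a‖w‖²}` of a centred
Gaussian. Expand `‖w + c‖^(2k) = (w + c)^k (w̄ + c̄)^k` binomially: rotation invariance kills every
monomial `w^m w̄^n` with `m ≠ n`, the diagonal ones are the radial moments `π m! / a^(m+1)`, and the
surviving sum `∑ C(k,m)² ‖c‖^(2(k-m)) m! / a^(m+1)` is `k! / a^(k+1) · L_k(-a‖c‖²)`.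
-/

open MeasureTheory Real

/-- The k-th Laguerre polynomial. -/
noncomputable def laguerre (k : ℕ) (x : ℝ) : ℝ :=
  ∑ j ∈ Finset.range (k + 1), (k.choose j : ℝ) * (-x) ^ j / (j.factorial : ℝ)

/-- Outcome distribution of the number measurement on the quantum Gaussian state ρ_{θ,N}. -/
noncomputable def Pdist (θ : ℂ) (N : ℝ) (k : ℕ) : ℝ :=
  (1 / (N + 1)) * (N / (N + 1)) ^ k * Real.exp (-(‖θ‖) ^ 2 / (N + 1)) *
    laguerre k (-(‖θ‖) ^ 2 / (N * (N + 1)))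

theorem sum_choose_sq_mul_factorial_div_pow_eq_laguerre {a : ℝ} (ha : a ≠ 0) (x : ℝ) (k : ℕ) :
    ∑ m ∈ Finset.range (k + 1), (k.choose m : ℝ) ^ 2 * x ^ (k - m) * (m.factorial / a ^ (m + 1))
      = k.factorial / a ^ (k + 1) * laguerre k (-(a * x)) := by
  rw [laguerre, Finset.mul_sum, ← Finset.sum_range_reflect]
  refine Finset.sum_congr rfl fun j hj => ?_
  have hjk : j ≤ k := Nat.lt_succ_iff.mp (Finset.mem_range.mp hj)
  rw [show k + 1 - 1 - j = k - j by omega, Nat.sub_sub_self hjk, Nat.choose_symm hjk]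
  have hfac : (k.factorial : ℝ) = k.choose j * j.factorial * (k - j).factorial := by
    exact_mod_cast (Nat.choose_mul_factorial_mul_factorial hjk).symm
  have hpow : a ^ (k + 1) = a ^ (k - j + 1) * a ^ j := by rw [← pow_add]; congr 1; omega
  rw [hfac, hpow]
  field_simp
  ring

theorem norm_sq_add_norm_sub_sq_div_eq {E : Type*} [NormedAddCommGroup E] [InnerProductSpace ℝ E]
    {N : ℝ} (hN : N ≠ 0) (hN₁ : N + 1 ≠ 0) (θ ξ : E) :
    ‖ξ‖ ^ 2 + ‖θ - ξ‖ ^ 2 / N = (N + 1) / N * ‖ξ - (N + 1)⁻¹ • θ‖ ^ 2 + ‖θ‖ ^ 2 / (N + 1) := by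
  rw [norm_sub_sq_real, norm_sub_sq_real, norm_smul, inner_smul_right, real_inner_comm,
    Real.norm_eq_abs, mul_pow, sq_abs]
  field_simp
  ring

namespace Complex

open ComplexConjugate

theorem integrable_rpow_mul_exp_neg_mul_rpow {p q b : ℝ} (hp : 1 ≤ p) (hq : -2 < q)
    (hb : 0 < b) : Integrable (fun x : ℂ => ‖x‖ ^ q * rexp (-b * ‖x‖ ^ p)) := by
  -- the integral is an explicit positive number, and a nonzero integral forces integrability
  refine Integrable.of_integral_ne_zero ?_
  rw [integral_rpow_mul_exp_neg_mul_rpow hp hq hb]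
  have hΓ := Real.Gamma_pos_of_pos (s := (q + 2) / p) (by apply div_pos <;> linarith)
  have hpow := Real.rpow_pos_of_pos hb (-(q + 2) / p)
  have hπ : 0 < 2 * π / p := by have := pi_pos; positivity
  positivity

theorem integrable_norm_pow_mul_exp_neg_mul_sq {b : ℝ} (hb : 0 < b) (n : ℕ) :
    Integrable (fun x : ℂ => ‖x‖ ^ n * rexp (-b * ‖x‖ ^ 2)) := by
  have h := integrable_rpow_mul_exp_neg_mul_rpow one_le_two
    (by linarith [(n.cast_nonneg : (0:ℝ) ≤ n)] : (-2:ℝ) < n) hb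
  simpa only [Real.rpow_natCast, Real.rpow_two] using h

theorem integral_norm_pow_two_mul_mul_exp_neg_mul_sq {b : ℝ} (hb : 0 < b) (n : ℕ) :
    ∫ x : ℂ, ‖x‖ ^ (2 * n) * rexp (-b * ‖x‖ ^ 2) = π * n.factorial / b ^ (n + 1) := by
  have h := integral_rpow_mul_exp_neg_mul_rpow one_le_two
    (by linarith [(n.cast_nonneg : (0:ℝ) ≤ n)] : (-2:ℝ) < (2 * n : ℕ)) hb
  simp only [Real.rpow_natCast, Real.rpow_two] at h
  rw [h, show ((2 * n : ℕ) + 2 : ℝ) / 2 = (n + 1 : ℕ) by push_cast; ring,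
    show -((2 * n : ℕ) + 2 : ℝ) / 2 = -(n + 1 : ℕ) by push_cast; ring,
    Real.rpow_neg hb.le, Real.rpow_natCast, Nat.cast_succ, Real.Gamma_nat_eq_factorial]
  field_simp

theorem integral_pow_mul_conj_pow_mul_radial_eq_zero (g : ℝ → ℂ) {m n : ℕ} (hmn : m ≠ n) :
    ∫ w : ℂ, w ^ m * conj w ^ n * g ‖w‖ = 0 := by
  have hmn' : ((m : ℂ) - n) ≠ 0 := sub_ne_zero.mpr (by exact_mod_cast hmn)
  -- rotating by the angle `π / (m - n)` multiplies the integrand by `-1`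
  set u : Circle := Circle.exp (π / ((m : ℝ) - n))
  have hu : (u : ℂ) ^ m * conj (u : ℂ) ^ n = -1 := by
    rw [Circle.coe_exp, ← Complex.exp_conj, ← Complex.exp_nat_mul, ← Complex.exp_nat_mul,
      ← Complex.exp_add, ← Complex.exp_pi_mul_I]
    congr 1
    simp only [map_mul, conj_ofReal, conj_I]
    push_cast
    field_simp
    ring
  have hrot := (rotation u).measurePreserving.integral_comp
    (rotation u).toHomeomorph.measurableEmbedding (fun w : ℂ => w ^ m * conj w ^ n * g ‖w‖)
  simp only [rotation_apply, norm_mul, Circle.norm_coe, one_mul, map_mul, mul_pow] at hrot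
  have hflip : ∀ w : ℂ, (u : ℂ) ^ m * w ^ m * (conj (u : ℂ) ^ n * conj w ^ n) * g ‖w‖
      = -(w ^ m * conj w ^ n * g ‖w‖) := fun w => by
    linear_combination (w ^ m * conj w ^ n * g ‖w‖) * hu
  simp_rw [hflip, integral_neg] at hrot
  linear_combination (-1 / 2 : ℂ) * hrot

theorem integrable_pow_mul_conj_pow_mul_exp_neg_mul_sq {b : ℝ} (hb : 0 < b) (m n : ℕ) :
    Integrable (fun w : ℂ => w ^ m * conj w ^ n * (rexp (-b * ‖w‖ ^ 2) : ℂ)) := by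
  refine (integrable_norm_pow_mul_exp_neg_mul_sq hb (m + n)).mono' (by fun_prop)
    (Filter.Eventually.of_forall fun w => ?_)
  simp only [norm_mul, norm_pow, norm_conj, norm_real,
    Real.norm_of_nonneg (Real.exp_pos _).le, pow_add, le_refl]

theorem integral_pow_mul_conj_pow_mul_exp_neg_mul_sq {b : ℝ} (hb : 0 < b) (m n : ℕ) :
    ∫ w : ℂ, w ^ m * conj w ^ n * (rexp (-b * ‖w‖ ^ 2) : ℂ)
      = if m = n then ((π * m.factorial / b ^ (m + 1) : ℝ) : ℂ) else 0 := by
  split_ifs with hmn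
  · subst hmn
    rw [← integral_norm_pow_two_mul_mul_exp_neg_mul_sq hb, ← integral_complex_ofReal]
    congr 1 with w
    rw [← mul_pow, mul_conj, normSq_eq_norm_sq, pow_mul]
    push_cast
    rfl
  · exact integral_pow_mul_conj_pow_mul_radial_eq_zero (fun r => (rexp (-b * r ^ 2) : ℂ)) hmn

theorem integral_norm_add_pow_mul_exp_neg_mul_sq {b : ℝ} (hb : 0 < b) (c : ℂ) (k : ℕ) :
    ∫ w : ℂ, ‖w + c‖ ^ (2 * k) * rexp (-b * ‖w‖ ^ 2)
      = π * k.factorial / b ^ (k + 1) * laguerre k (-(b * ‖c‖ ^ 2)) := by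
  set gauss : ℂ → ℂ := fun w => (rexp (-b * ‖w‖ ^ 2) : ℂ)
  have hexpand : ∀ w : ℂ, ((‖w + c‖ ^ (2 * k) * rexp (-b * ‖w‖ ^ 2) : ℝ) : ℂ)
      = ∑ m ∈ Finset.range (k + 1), ∑ n ∈ Finset.range (k + 1),
          (k.choose m * k.choose n * c ^ (k - m) * conj c ^ (k - n) : ℂ) *
            (w ^ m * conj w ^ n * gauss w) := by
    intro w
    have hnorm : ((‖w + c‖ ^ (2 * k) : ℝ) : ℂ) = (w + c) ^ k * conj (w + c) ^ k := by
      rw [← mul_pow, mul_conj, normSq_eq_norm_sq, pow_mul]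
      push_cast
      rfl
    rw [ofReal_mul, hnorm, map_add, add_pow, add_pow, Finset.sum_mul_sum, Finset.sum_mul]
    refine Finset.sum_congr rfl fun m _ => ?_
    rw [Finset.sum_mul]
    refine Finset.sum_congr rfl fun n _ => ?_
    ring
  have hterm : ∀ m n : ℕ, ∫ w : ℂ, (k.choose m * k.choose n * c ^ (k - m) * conj c ^ (k - n) : ℂ) *
      (w ^ m * conj w ^ n * gauss w)
        = if n = m then ((k.choose m ^ 2 * (‖c‖ ^ 2) ^ (k - m) *
            (π * m.factorial / b ^ (m + 1)) : ℝ) : ℂ) else 0 := by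
    intro m n
    rw [integral_const_mul, integral_pow_mul_conj_pow_mul_exp_neg_mul_sq hb]
    split_ifs with hnm hmn hmn
    · subst hnm
      rw [mul_assoc _ (c ^ _), ← mul_pow, mul_conj, normSq_eq_norm_sq]
      push_cast
      ring
    · exact absurd hnm.symm hmn
    · exact absurd hmn.symm hnm
    · rw [mul_zero]
  apply ofReal_injective
  rw [← integral_complex_ofReal]
  simp_rw [hexpand]
  have hint := fun m n => (integrable_pow_mul_conj_pow_mul_exp_neg_mul_sq hb m n).const_mul
    (k.choose m * k.choose n * c ^ (k - m) * conj c ^ (k - n) : ℂ)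
  rw [integral_finsetSum _ fun m _ => integrable_finsetSum _ fun n _ => hint m n]
  have hrow : ∀ m ∈ Finset.range (k + 1), ∫ w : ℂ, ∑ n ∈ Finset.range (k + 1),
      (k.choose m * k.choose n * c ^ (k - m) * conj c ^ (k - n) : ℂ) *
        (w ^ m * conj w ^ n * gauss w)
        = ((k.choose m ^ 2 * (‖c‖ ^ 2) ^ (k - m) * (π * m.factorial / b ^ (m + 1)) : ℝ) : ℂ) := by
    intro m hm
    rw [integral_finsetSum _ fun n _ => hint m n, Finset.sum_congr rfl fun n _ => hterm m n,
      Finset.sum_ite_eq', if_pos hm]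
  rw [Finset.sum_congr rfl hrow, ← ofReal_sum, mul_div_assoc, mul_assoc,
    ← sum_choose_sq_mul_factorial_div_pow_eq_laguerre hb.ne', Finset.mul_sum]
  congr 1
  refine Finset.sum_congr rfl fun m _ => ?_
  ring

end Complex

theorem number_measurement_probability (θ : ℂ) (N : ℝ) (hN : 0 < N) (k : ℕ) :
    (1 / (π * (k.factorial : ℝ) * N)) *
      ∫ ξ : ℂ, ‖ξ‖ ^ (2 * k) * Real.exp (-(‖ξ‖) ^ 2) *
        Real.exp (-(‖θ - ξ‖) ^ 2 / N) = Pdist θ N k := by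
  have hN₁ : 0 < N + 1 := by linarith
  set a := (N + 1) / N with ha
  set c := (N + 1)⁻¹ • θ
  have hintegrand : ∀ ξ : ℂ, ‖ξ‖ ^ (2 * k) * rexp (-‖ξ‖ ^ 2) * rexp (-‖θ - ξ‖ ^ 2 / N)
      = rexp (-‖θ‖ ^ 2 / (N + 1)) * (‖ξ‖ ^ (2 * k) * rexp (-a * ‖ξ - c‖ ^ 2)) := by
    intro ξ
    have hsq := norm_sq_add_norm_sub_sq_div_eq hN.ne' hN₁.ne' θ ξ
    rw [mul_assoc, ← Real.exp_add, mul_left_comm, ← Real.exp_add]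
    congr 2
    linear_combination -hsq
  have hshift : ∫ ξ : ℂ, ‖ξ‖ ^ (2 * k) * rexp (-a * ‖ξ - c‖ ^ 2)
      = ∫ w : ℂ, ‖w + c‖ ^ (2 * k) * rexp (-a * ‖w‖ ^ 2) := by
    simpa only [sub_add_cancel] using integral_sub_right_eq_self (μ := volume)
      (fun w : ℂ => ‖w + c‖ ^ (2 * k) * rexp (-a * ‖w‖ ^ 2)) c
  have harg : -(a * ‖c‖ ^ 2) = -‖θ‖ ^ 2 / (N * (N + 1)) := by
    rw [norm_smul, Real.norm_of_nonneg (inv_nonneg.mpr hN₁.le), ha]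
    field_simp
  simp_rw [hintegrand]
  rw [integral_const_mul, hshift,
    Complex.integral_norm_add_pow_mul_exp_neg_mul_sq (by positivity) c k, harg, Pdist, ha,
    div_pow, div_pow]
  field_simp
  ring
end

section
/- For every c ∈ ℂ and k ∈ ℕ, ∫_{ℂ} |ξ + c|^{2k} e^{-|ξ|²} dξ = π · k! · L_k(-|c|²), where L_k is the k-th Laguerre polynomial and the integral is over ℂ ≅ ℝ² with Lebesgue measure. -/
/-!
Write `|ξ + c|^{2k} = (ξ + c)^k (ξ̄ + c̄)^k` and expand both factors binomially: the integral
becomes a combination of the Gaussian moments `∫ ξ^m ξ̄^n e^{-|ξ|²}`. These are orthogonal by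
rotation invariance: substituting `ξ ↦ uξ` with `|u| = 1` and `u^{m-n} = -1` negates the
integrand when `m ≠ n`. For `m = n` the moment is the radial integral `∫ |ξ|^{2m} e^{-|ξ|²} = π m!`.
Only the diagonal survives, leaving `∑ₘ C(k,m)² |c|^{2(k-m)} π m! = π k! L_k(-|c|²)`.
-/

open MeasureTheory Real

open ComplexConjugate Finset Nat

theorem integrable_norm_pow_mul_exp_neg_norm_sq {E : Type*} [NormedAddCommGroup E]
    [NormedSpace ℝ E] [Nontrivial E] [FiniteDimensional ℝ E] [MeasurableSpace E] [BorelSpace E]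
    (μ : Measure E) [μ.IsAddHaarMeasure] (n : ℕ) :
    Integrable (fun x : E => ‖x‖ ^ n * rexp (-‖x‖ ^ 2)) μ := by
  refine (integrable_fun_norm_addHaar μ (f := fun r => r ^ n * rexp (-r ^ 2))).mpr ?_
  have hs : (-1 : ℝ) < (Module.finrank ℝ E - 1 + n : ℕ) := by
    linarith [(Nat.cast_nonneg _ : (0 : ℝ) ≤ (Module.finrank ℝ E - 1 + n : ℕ))]
  refine (integrableOn_rpow_mul_exp_neg_mul_sq one_pos hs).congr_fun (fun r _ => ?_)
    measurableSet_Ioi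
  dsimp only
  rw [Real.rpow_natCast, pow_add, smul_eq_mul, neg_one_mul, mul_assoc]

theorem integral_pow_mul_conj_pow_mul_radial_eq_zero {m n : ℕ} (h : m ≠ n) (g : ℝ → ℂ) :
    ∫ ξ : ℂ, ξ ^ m * conj ξ ^ n * g ‖ξ‖ = 0 := by
  wlog hnm : n < m generalizing m n g
  · have := this h.symm (conj ∘ g) (by omega)
    rw [← map_eq_zero_iff (starRingEnd ℂ) (RingHom.injective _), ← integral_conj, ← this]
    simp [mul_comm]
  set u := Circle.exp (π / (m - n : ℕ))
  have hu : (u : ℂ) ^ m * conj (u : ℂ) ^ n = -1 := by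
    have hd : (m : ℂ) - n ≠ 0 := sub_ne_zero.mpr (by exact_mod_cast h)
    rw [Circle.coe_exp, ← Complex.exp_conj, ← Complex.exp_nat_mul, ← Complex.exp_nat_mul,
      ← Complex.exp_add, ← Complex.exp_pi_mul_I]
    congr 1
    simp only [map_mul, Complex.conj_ofReal, Complex.conj_I]
    push_cast [Nat.cast_sub hnm.le]
    field_simp
    ring
  have hrot := (rotation u).measurePreserving.integral_comp'
    (f := (rotation u).toHomeomorph.toMeasurableEquiv) (fun ξ : ℂ => ξ ^ m * conj ξ ^ n * g ‖ξ‖)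
  have hsymm (ξ : ℂ) :
      (u * ξ) ^ m * conj (u * ξ) ^ n * g ‖u * ξ‖ = -(ξ ^ m * conj ξ ^ n * g ‖ξ‖) := by
    rw [norm_mul, Circle.norm_coe, one_mul, map_mul, mul_pow, mul_pow, ← neg_one_mul, ← hu]
    ring
  simp only [Homeomorph.toMeasurableEquiv_coe, LinearIsometryEquiv.coe_toHomeomorph,
    rotation_apply, hsymm, integral_neg] at hrot
  linear_combination -hrot / 2

theorem integral_norm_pow_mul_exp_neg_norm_sq (m : ℕ) :
    ∫ ξ : ℂ, ‖ξ‖ ^ (2 * m) * rexp (-‖ξ‖ ^ 2) = π * m ! := by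
  have h := Complex.integral_rpow_mul_exp_neg_rpow (p := 2) (q := (2 * m : ℕ)) one_le_two
    (by linarith [(Nat.cast_nonneg _ : (0 : ℝ) ≤ (2 * m : ℕ))])
  simp only [Real.rpow_natCast, Real.rpow_two] at h
  rw [h, show (((2 * m : ℕ) : ℝ) + 2) / 2 = m + 1 by push_cast; ring,
    Real.Gamma_nat_eq_factorial]
  ring

theorem integral_pow_mul_conj_pow_mul_exp_neg_norm_sq (m n : ℕ) :
    ∫ ξ : ℂ, ξ ^ m * conj ξ ^ n * (rexp (-‖ξ‖ ^ 2) : ℂ) = if m = n then (π * m ! : ℂ) else 0 := by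
  split_ifs with h
  · subst h
    have hdiag : ∀ ξ : ℂ, ξ ^ m * conj ξ ^ m * (rexp (-‖ξ‖ ^ 2) : ℂ) =
        ((‖ξ‖ ^ (2 * m) * rexp (-‖ξ‖ ^ 2) : ℝ) : ℂ) := fun ξ => by
      rw [← mul_pow, Complex.mul_conj']; push_cast; ring
    simp_rw [hdiag, integral_complex_ofReal, integral_norm_pow_mul_exp_neg_norm_sq]
    norm_num
  · exact integral_pow_mul_conj_pow_mul_radial_eq_zero h fun r => (rexp (-r ^ 2) : ℂ)

theorem integrable_pow_mul_conj_pow_mul_exp_neg_norm_sq (m n : ℕ) :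
    Integrable fun ξ : ℂ => ξ ^ m * conj ξ ^ n * (rexp (-‖ξ‖ ^ 2) : ℂ) := by
  refine (integrable_norm_pow_mul_exp_neg_norm_sq volume (m + n)).mono' (by fun_prop)
    (.of_forall fun ξ => le_of_eq ?_)
  rw [norm_mul, norm_mul, norm_pow, norm_pow, Complex.norm_conj, Complex.norm_real,
    Real.norm_of_nonneg (Real.exp_pos _).le, pow_add]

theorem ofReal_norm_add_pow_two_mul_eq_sum (z w : ℂ) (k : ℕ) :
    ((‖z + w‖ ^ (2 * k) : ℝ) : ℂ) = ∑ m ∈ range (k + 1), ∑ n ∈ range (k + 1),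
      (k.choose m * k.choose n * w ^ (k - m) * conj w ^ (k - n) : ℂ) * (z ^ m * conj z ^ n) := by
  rw [pow_mul, Complex.ofReal_pow, Complex.ofReal_pow, ← Complex.mul_conj', mul_pow, map_add,
    add_pow, add_pow, sum_mul_sum]
  exact sum_congr rfl fun m _ => sum_congr rfl fun n _ => by ring

theorem sum_choose_sq_mul_pow_mul_factorial (k : ℕ) (t : ℝ) :
    ∑ m ∈ range (k + 1), (k.choose m : ℝ) ^ 2 * t ^ (k - m) * m ! = k ! * laguerre k (-t) := by
  rw [laguerre, mul_sum]
  conv_rhs => rw [← sum_range_reflect]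
  refine sum_congr rfl fun m hm => ?_
  have hmk : m ≤ k := Nat.lt_succ_iff.mp (mem_range.mp hm)
  rw [show k + 1 - 1 - m = k - m by omega, Nat.choose_symm hmk, neg_neg]
  have h : (k.choose m : ℝ) * m ! * (k - m)! = k ! := by
    exact_mod_cast Nat.choose_mul_factorial_mul_factorial hmk
  have : ((k - m)! : ℝ) ≠ 0 := by positivity
  field_simp
  linear_combination t ^ (k - m) * (k.choose m : ℝ) * h

theorem gaussian_moment_laguerre (c : ℂ) (k : ℕ) :
    ∫ ξ : ℂ, ‖ξ + c‖ ^ (2 * k) * Real.exp (-(‖ξ‖) ^ 2)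
      = π * (k.factorial : ℝ) * laguerre k (-(‖c‖) ^ 2) := by
  apply Complex.ofReal_injective
  have hint := integrable_pow_mul_conj_pow_mul_exp_neg_norm_sq
  calc ((∫ ξ : ℂ, ‖ξ + c‖ ^ (2 * k) * rexp (-‖ξ‖ ^ 2) : ℝ) : ℂ)
      = ∫ ξ : ℂ, ∑ m ∈ range (k + 1), ∑ n ∈ range (k + 1),
          (k.choose m * k.choose n * c ^ (k - m) * conj c ^ (k - n) : ℂ) *
            (ξ ^ m * conj ξ ^ n * (rexp (-‖ξ‖ ^ 2) : ℂ)) := by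
        rw [← integral_complex_ofReal]
        congr 1 with ξ
        rw [Complex.ofReal_mul, ofReal_norm_add_pow_two_mul_eq_sum, sum_mul]
        simp_rw [sum_mul, mul_assoc]
    _ = ∑ m ∈ range (k + 1), ∑ n ∈ range (k + 1),
          (k.choose m * k.choose n * c ^ (k - m) * conj c ^ (k - n) : ℂ) *
            if m = n then (π * m ! : ℂ) else 0 := by
        rw [integral_finsetSum _ fun m _ =>
          integrable_finsetSum _ fun n _ => (hint m n).const_mul _]
        refine sum_congr rfl fun m _ => ?_
        rw [integral_finsetSum _ fun n _ => (hint m n).const_mul _]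
        simp_rw [integral_const_mul, integral_pow_mul_conj_pow_mul_exp_neg_norm_sq]
    _ = ∑ m ∈ range (k + 1),
          (((k.choose m : ℝ) ^ 2 * (‖c‖ ^ 2) ^ (k - m) * m ! : ℝ) : ℂ) * π := by
        refine sum_congr rfl fun m hm => ?_
        simp only [mul_ite, mul_zero, sum_ite_eq, hm, if_true]
        push_cast
        rw [← Complex.mul_conj', mul_pow]
        ring
    _ = _ := by
        rw [← sum_mul, ← Complex.ofReal_sum, sum_choose_sq_mul_pow_mul_factorial]
        push_cast; ring
end

section
/- For all x > 0 and natural numbers k > l, the ratio L_k(-x)/L_l(-x) of Laguerre polynomial values at negative arguments is strictly monotone increasing in x; for k < l it is strictly monotone decreasing in x. -/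
open Finset

theorem Nat.choose_mul_choose_le_choose_mul_choose {k l i j : ℕ} (hlk : l ≤ k) (hji : j ≤ i) :
    k.choose j * l.choose i ≤ k.choose i * l.choose j := by
  -- Multiplied by `i! j!` this compares falling factorials, and
  -- `n.descFactorial i = (n - j).descFactorial (i - j) * n.descFactorial j` with the first factor
  -- monotone in `n`.
  have hdesc : l.descFactorial i * k.descFactorial j ≤ k.descFactorial i * l.descFactorial j := by
    rw [← Nat.descFactorial_mul_descFactorial hji, ← Nat.descFactorial_mul_descFactorial hji,
      mul_assoc, mul_assoc, mul_comm (l.descFactorial j)]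
    exact Nat.mul_le_mul_right _ (Nat.descFactorial_le _ (by omega))
  simp only [Nat.descFactorial_eq_factorial_mul_choose] at hdesc
  refine Nat.le_of_mul_le_mul_left ?_ (Nat.mul_pos i.factorial_pos j.factorial_pos)
  linarith

section PowerSums

variable {R : Type*} [CommRing R] [LinearOrder R] [IsStrictOrderedRing R]

theorem pow_mul_pow_le_pow_mul_pow {x y : R} {i j : ℕ} (hji : j ≤ i) (hx : 0 ≤ x)
    (hxy : x ≤ y) : x ^ i * y ^ j ≤ y ^ i * x ^ j := by
  obtain ⟨d, rfl⟩ := Nat.exists_eq_add_of_le hji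
  calc x ^ (j + d) * y ^ j = x ^ d * (x ^ j * y ^ j) := by ring
    _ ≤ y ^ d * (x ^ j * y ^ j) := by
      gcongr
      exact mul_nonneg (pow_nonneg hx j) (pow_nonneg (hx.trans hxy) j)
    _ = y ^ (j + d) * x ^ j := by ring

theorem pow_mul_pow_lt_pow_mul_pow {x y : R} {i j : ℕ} (hji : j < i) (hx : 0 < x)
    (hxy : x < y) : x ^ i * y ^ j < y ^ i * x ^ j := by
  obtain ⟨d, rfl⟩ := Nat.exists_eq_add_of_le hji.le
  have hd : d ≠ 0 := by omega
  calc x ^ (j + d) * y ^ j = x ^ d * (x ^ j * y ^ j) := by ring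
    _ < y ^ d * (x ^ j * y ^ j) := by
      gcongr
      · exact mul_pos (pow_pos hx j) (pow_pos (hx.trans hxy) j)
    _ = y ^ (j + d) * x ^ j := by ring

theorem sum_mul_pow_mul_sum_mul_pow_lt {s : Finset ℕ} {a b : ℕ → R}
    (hab : ∀ i ∈ s, ∀ j ∈ s, j ≤ i → a j * b i ≤ a i * b j) {i₀ j₀ : ℕ} (hi₀ : i₀ ∈ s)
    (hj₀ : j₀ ∈ s) (hji₀ : j₀ < i₀) (hab₀ : a j₀ * b i₀ < a i₀ * b j₀) {x y : R} (hx : 0 < x)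
    (hxy : x < y) :
    (∑ i ∈ s, a i * x ^ i) * (∑ j ∈ s, b j * y ^ j) <
      (∑ i ∈ s, a i * y ^ i) * (∑ j ∈ s, b j * x ^ j) := by
  set u : ℕ → ℕ → R := fun i j ↦ a i * b j * (y ^ i * x ^ j - x ^ i * y ^ j)
  set t : ℕ → ℕ → R := fun i j ↦ (a i * b j - a j * b i) * (y ^ i * x ^ j - x ^ i * y ^ j)
  have hdiff : (∑ i ∈ s, a i * y ^ i) * (∑ j ∈ s, b j * x ^ j) -
      (∑ i ∈ s, a i * x ^ i) * (∑ j ∈ s, b j * y ^ j) = ∑ i ∈ s, ∑ j ∈ s, u i j := by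
    simp only [sum_mul_sum, ← sum_sub_distrib, u]
    exact sum_congr rfl fun i _ ↦ sum_congr rfl fun j _ ↦ by ring
  have hsymm : ∑ i ∈ s, ∑ j ∈ s, t i j = 2 * ∑ i ∈ s, ∑ j ∈ s, u i j := by
    have : ∑ i ∈ s, ∑ j ∈ s, t i j = ∑ i ∈ s, ∑ j ∈ s, u i j + ∑ i ∈ s, ∑ j ∈ s, u j i := by
      simp only [← sum_add_distrib, t, u]
      exact sum_congr rfl fun i _ ↦ sum_congr rfl fun j _ ↦ by ring
    rw [this, sum_comm (f := fun i j ↦ u j i)]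
    ring
  have ht_of_le : ∀ i ∈ s, ∀ j ∈ s, j ≤ i → 0 ≤ t i j := fun i hi j hj hji ↦
    mul_nonneg (sub_nonneg.2 (hab i hi j hj hji))
      (sub_nonneg.2 (pow_mul_pow_le_pow_mul_pow hji hx.le hxy.le))
  -- `t` is symmetric: swapping `i` and `j` flips the sign of both factors.
  have ht : ∀ i ∈ s, ∀ j ∈ s, 0 ≤ t i j := by
    intro i hi j hj
    rcases le_total j i with hji | hij
    · exact ht_of_le i hi j hj hji
    · convert ht_of_le j hj i hi hij using 1
      ring
  have ht₀ : 0 < t i₀ j₀ :=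
    mul_pos (sub_pos.2 hab₀) (sub_pos.2 (pow_mul_pow_lt_pow_mul_pow hji₀ hx hxy))
  have hpos : 0 < ∑ i ∈ s, ∑ j ∈ s, t i j :=
    sum_pos' (fun i hi ↦ sum_nonneg (ht i hi))
      ⟨i₀, hi₀, sum_pos' (ht i₀ hi₀) ⟨j₀, hj₀, ht₀⟩⟩
  linarith

end PowerSums

noncomputable def laguerreCoeff (k j : ℕ) : ℝ := k.choose j / j.factorial

theorem laguerre_neg_eq_sum {k N : ℕ} (hkN : k < N) (x : ℝ) :
    laguerre k (-x) = ∑ j ∈ range N, laguerreCoeff k j * x ^ j := by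
  rw [laguerre, sum_subset (range_subset_range.2 hkN)]
  · exact sum_congr rfl fun j _ ↦ by rw [neg_neg, laguerreCoeff]; ring
  · intro j _ hj
    rw [Nat.choose_eq_zero_of_lt (by simp at hj; omega)]
    simp

theorem laguerre_neg_pos (k : ℕ) {x : ℝ} (hx : 0 ≤ x) : 0 < laguerre k (-x) := by
  rw [laguerre_neg_eq_sum (Nat.lt_succ_self k)]
  exact sum_pos' (fun j _ ↦ by unfold laguerreCoeff; positivity)
    ⟨0, mem_range.2 k.succ_pos, by simp [laguerreCoeff]⟩

theorem laguerreCoeff_mul_le {k l i j : ℕ} (hlk : l ≤ k) (hji : j ≤ i) :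
    laguerreCoeff k j * laguerreCoeff l i ≤ laguerreCoeff k i * laguerreCoeff l j := by
  simp only [laguerreCoeff, div_mul_div_comm, mul_comm (j.factorial : ℝ)]
  refine div_le_div_of_nonneg_right ?_ (by positivity)
  exact_mod_cast Nat.choose_mul_choose_le_choose_mul_choose hlk hji

theorem laguerre_neg_mul_lt_mul {k l : ℕ} (hlk : l < k) {x y : ℝ} (hx : 0 < x) (hxy : x < y) :
    laguerre k (-x) * laguerre l (-y) < laguerre k (-y) * laguerre l (-x) := by
  have hlk' : l < k + 1 := by omega
  simp only [laguerre_neg_eq_sum k.lt_succ_self, laguerre_neg_eq_sum hlk']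
  refine sum_mul_pow_mul_sum_mul_pow_lt (fun i _ j _ hji ↦ laguerreCoeff_mul_le hlk.le hji)
    (mem_range.2 k.lt_succ_self) (mem_range.2 k.succ_pos) (by omega) ?_ hx hxy
  simp [laguerreCoeff, Nat.choose_eq_zero_of_lt hlk, Nat.factorial_pos]

theorem laguerre_ratio_monotone (k l : ℕ) :
    (l < k → ∀ x y : ℝ, 0 < x → x < y →
      laguerre k (-x) / laguerre l (-x) < laguerre k (-y) / laguerre l (-y)) ∧
    (k < l → ∀ x y : ℝ, 0 < x → x < y →
      laguerre k (-y) / laguerre l (-y) < laguerre k (-x) / laguerre l (-x)) := by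
  refine ⟨fun hlk x y hx hxy ↦ ?_, fun hkl x y hx hxy ↦ ?_⟩
  · rw [div_lt_div_iff₀ (laguerre_neg_pos l hx.le) (laguerre_neg_pos l (hx.trans hxy).le)]
    exact laguerre_neg_mul_lt_mul hlk hx hxy
  · rw [div_lt_div_iff₀ (laguerre_neg_pos l (hx.trans hxy).le) (laguerre_neg_pos l hx.le),
      mul_comm, mul_comm (laguerre k (-x))]
    exact laguerre_neg_mul_lt_mul hkl hx hxy
end

section
/- The probability distribution P_{θ,N}(k) = (1/(N+1)) (N/(N+1))^k e^{-|θ|²/(N+1)} L_k(-|θ|²/(N(N+1))) on ℕ has mean |θ|² + N and variance N(N+1) + |θ|²(2N+1). -/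
/-!
Expanding the Laguerre polynomial exhibits `P_{θ,N}` as a Poisson mixture of negative binomial
laws: with `q = N / (N + 1)` and `z = |θ|² / (N + 1)`,
`P_{θ,N}(k) = ∑ⱼ e^{-z} zʲ / j! · C(k, j) qᵏ / (Nʲ (N + 1))`.
All terms being nonnegative, a moment of `P_{θ,N}` may be computed by summing over `k` first,
which gives the negative binomial moments (via `k C(k, j) = j C(k, j) + (j + 1) C(k, j + 1)`),
and then over `j`, which gives moments of the exponential series. The variance is then
`E[k²] - E[k]²`.
-/

open Finset Nat

theorem hasSum_iterate_comm_of_nonneg {β γ : Type*} {f : β → γ → ℝ} (hf : ∀ b c, 0 ≤ f b c)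
    {g : β → ℝ} {h : γ → ℝ} {a : ℝ} (hg : ∀ b, HasSum (f b) (g b)) (ha : HasSum g a)
    (hh : ∀ c, HasSum (fun b ↦ f b c) (h c)) : HasSum h a := by
  have hF : Summable (Function.uncurry f) :=
    (summable_prod_of_nonneg fun p ↦ hf p.1 p.2).2
      ⟨fun b ↦ (hg b).summable, by simpa only [fun b ↦ (hg b).tsum_eq] using ha.summable⟩
  have hFa : HasSum (Function.uncurry f) a :=
    (hF.hasSum.prod_fiberwise hg).unique ha ▸ hF.hasSum
  exact ((Equiv.prodComm γ β).hasSum_iff.2 hFa).prod_fiberwise hh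

theorem hasSum_descFactorial_mul_pow_div_factorial (m : ℕ) (z : ℝ) :
    HasSum (fun j : ℕ ↦ (j.descFactorial m : ℝ) * z ^ j / j !) (z ^ m * Real.exp z) := by
  rw [← hasSum_nat_add_iff' m]
  have hlow : ∑ j ∈ range m, (j.descFactorial m : ℝ) * z ^ j / j ! = 0 :=
    sum_eq_zero fun j hj ↦ by
      rw [descFactorial_eq_zero_iff_lt.2 (mem_range.1 hj)]; simp
  have hshift (n : ℕ) :
      ((n + m).descFactorial m : ℝ) * z ^ (n + m) / (n + m) ! = z ^ m * (z ^ n / n !) := by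
    have h := factorial_mul_descFactorial (le_add_self : m ≤ n + m)
    rw [Nat.add_sub_cancel] at h
    rw [← h, pow_add]; push_cast
    field_simp
  simp only [hlow, sub_zero, hshift]
  exact (Real.exp_eq_exp_ℝ ▸ NormedSpace.expSeries_div_hasSum_exp z).mul_left _

theorem hasSum_choose_mul_pow {𝕜 : Type*} [NormedField 𝕜] [HasSummableGeomSeries 𝕜] (j : ℕ)
    {r : 𝕜} (hr : ‖r‖ < 1) :
    HasSum (fun k : ℕ ↦ (k.choose j : 𝕜) * r ^ k) (r ^ j / (1 - r) ^ (j + 1)) := by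
  rw [← hasSum_nat_add_iff' j]
  have hlow : ∑ k ∈ range j, (k.choose j : 𝕜) * r ^ k = 0 :=
    sum_eq_zero fun k hk ↦ by rw [choose_eq_zero_of_lt (mem_range.1 hk)]; simp
  rw [hlow, sub_zero]
  convert! (hasSum_choose_mul_geometric_of_norm_lt_one j hr).mul_right (r ^ j) using 1
  · funext n; rw [pow_add]; ring
  · ring

theorem self_mul_choose_eq (k j : ℕ) :
    k * k.choose j = j * k.choose j + (j + 1) * k.choose (j + 1) := by
  rcases le_or_gt j k with h | h
  · rw [mul_comm (j + 1), choose_succ_right_eq, mul_comm (k.choose j), ← Nat.add_mul,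
      Nat.add_sub_cancel' h]
  · simp [choose_eq_zero_of_lt h, choose_eq_zero_of_lt (h.trans (lt_succ_self j))]

theorem hasSum_choose_mul_natCast_mul {R : Type*} [CommSemiring R] [TopologicalSpace R]
    [IsTopologicalSemiring R] {g V : ℕ → R} (h : ∀ j, HasSum (fun k ↦ (k.choose j : R) * g k) (V j))
    (j : ℕ) :
    HasSum (fun k : ℕ ↦ (k.choose j : R) * (k * g k)) (j * V j + (j + 1) * V (j + 1)) := by
  convert! ((h j).mul_left (j : R)).add ((h (j + 1)).mul_left ((j : R) + 1)) using 1
  funext k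
  have h_cast := congrArg (Nat.cast : ℕ → R) (self_mul_choose_eq k j)
  push_cast at h_cast
  calc (k.choose j : R) * (k * g k) = ((k : R) * k.choose j) * g k := by ring
    _ = _ := by rw [h_cast]; ring

theorem HasSum.sub_sq_mul {ι : Type*} {p x : ι → ℝ} {μ m : ℝ} (h0 : HasSum p 1)
    (h1 : HasSum (fun i ↦ x i * p i) μ) (h2 : HasSum (fun i ↦ x i ^ 2 * p i) m) :
    HasSum (fun i ↦ (x i - μ) ^ 2 * p i) (m - μ ^ 2) := by
  convert! (h2.add (h1.mul_left (-2 * μ))).add (h0.mul_left (μ ^ 2)) using 1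
  · funext i; ring
  · ring

theorem hasSum_choose_mul_div_add_one_pow {N : ℝ} (hN : 0 ≤ N) (j : ℕ) :
    HasSum (fun k : ℕ ↦ (k.choose j : ℝ) * (N / (N + 1)) ^ k) (N ^ j * (N + 1)) := by
  have hN1 : 0 < N + 1 := by linarith
  have hq : ‖N / (N + 1)‖ < 1 := by
    rw [Real.norm_of_nonneg (by positivity), div_lt_one hN1]; linarith
  convert! hasSum_choose_mul_pow j hq using 1
  rw [one_sub_div hN1.ne', add_sub_cancel_left, div_pow, one_div_pow, pow_succ]
  field_simp

theorem hasSum_choose_mul_natCast_mul_div_add_one_pow {N : ℝ} (hN : 0 ≤ N) (j : ℕ) :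
    HasSum (fun k : ℕ ↦ (k.choose j : ℝ) * (k * (N / (N + 1)) ^ k))
      (N ^ j * (N + 1) * ((N + 1) * j + N)) := by
  convert! hasSum_choose_mul_natCast_mul (hasSum_choose_mul_div_add_one_pow hN) j using 1
  ring

theorem laguerre_neg (k : ℕ) (y : ℝ) :
    laguerre k (-y) = ∑ j ∈ range (k + 1), (k.choose j : ℝ) * y ^ j / j ! := by
  simp only [laguerre, neg_neg]

/-- `E j` is the mean of `w` under the `j`-th negative binomial component of `Pdist θ N`. -/
theorem hasSum_mul_Pdist (θ : ℂ) {N : ℝ} (hN : 0 < N) {w E : ℕ → ℝ} {a : ℝ} (hw : ∀ k, 0 ≤ w k)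
    (hE : ∀ j, HasSum (fun k : ℕ ↦ (k.choose j : ℝ) * (w k * (N / (N + 1)) ^ k))
      (N ^ j * (N + 1) * E j))
    (ha : HasSum (fun j : ℕ ↦ E j * (‖θ‖ ^ 2 / (N + 1)) ^ j / j !) a) :
    HasSum (fun k ↦ w k * Pdist θ N k) (Real.exp (-(‖θ‖ ^ 2 / (N + 1))) * a) := by
  set z := ‖θ‖ ^ 2 / (N + 1)
  set y := ‖θ‖ ^ 2 / (N * (N + 1))
  set c := Real.exp (-z) / (N + 1)
  have hyz : y * N = z := by simp only [y, z]; field_simp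
  refine hasSum_iterate_comm_of_nonneg (f := fun j k ↦
      c * (y ^ j / j !) * ((k.choose j : ℝ) * (w k * (N / (N + 1)) ^ k)))
    (fun j k ↦ by have := hw k; positivity) (fun j ↦ (hE j).mul_left _) ?_ fun k ↦ ?_
  · have hterm (j : ℕ) :
        c * (y ^ j / j !) * (N ^ j * (N + 1) * E j) = Real.exp (-z) * (E j * z ^ j / j !) := by
      simp only [c]
      rw [← hyz, mul_pow]
      field_simp
    simpa only [hterm] using ha.mul_left (Real.exp (-z))
  · have hPdist : w k * Pdist θ N k = ∑ j ∈ range (k + 1),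
        c * (y ^ j / j !) * ((k.choose j : ℝ) * (w k * (N / (N + 1)) ^ k)) := by
      rw [Pdist, neg_div (N * (N + 1)), laguerre_neg, mul_sum, mul_sum]
      refine sum_congr rfl fun j _ ↦ ?_
      simp only [c, neg_div]
      ring
    rw [hPdist]
    refine hasSum_sum_of_ne_finset_zero fun j hj ↦ ?_
    rw [choose_eq_zero_of_lt (by simpa using hj)]
    simp

theorem hasSum_Pdist (θ : ℂ) {N : ℝ} (hN : 0 < N) : HasSum (Pdist θ N) 1 := by
  have h := hasSum_mul_Pdist θ hN (w := fun _ ↦ 1) (E := fun _ ↦ 1) (fun _ ↦ zero_le_one)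
    (fun j ↦ by simpa using hasSum_choose_mul_div_add_one_pow hN.le j)
    (by simpa using hasSum_descFactorial_mul_pow_div_factorial 0 (‖θ‖ ^ 2 / (N + 1)))
  simpa [← Real.exp_add] using h

theorem hasSum_natCast_mul_Pdist (θ : ℂ) {N : ℝ} (hN : 0 < N) :
    HasSum (fun k : ℕ ↦ (k : ℝ) * Pdist θ N k) (‖θ‖ ^ 2 + N) := by
  set z := ‖θ‖ ^ 2 / (N + 1) with hz
  have ha : HasSum (fun j : ℕ ↦ ((N + 1) * j + N) * z ^ j / j !)
      (((N + 1) * z + N) * Real.exp z) := by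
    convert! ((hasSum_descFactorial_mul_pow_div_factorial 1 z).mul_left (N + 1)).add
      ((hasSum_descFactorial_mul_pow_div_factorial 0 z).mul_left N) using 1
    · funext j; simp only [descFactorial_one, descFactorial_zero]; push_cast; ring
    · ring
  convert! hasSum_mul_Pdist θ hN (fun k ↦ Nat.cast_nonneg k)
    (hasSum_choose_mul_natCast_mul_div_add_one_pow hN.le) ha using 1
  rw [mul_left_comm, ← Real.exp_add, neg_add_cancel, Real.exp_zero, mul_one, hz]
  field_simp

theorem hasSum_sq_mul_Pdist (θ : ℂ) {N : ℝ} (hN : 0 < N) :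
    HasSum (fun k : ℕ ↦ (k : ℝ) ^ 2 * Pdist θ N k)
      ((‖θ‖ ^ 2 + N) ^ 2 + (N * (N + 1) + ‖θ‖ ^ 2 * (2 * N + 1))) := by
  set z := ‖θ‖ ^ 2 / (N + 1) with hz
  have hE (j : ℕ) : HasSum (fun k : ℕ ↦ (k.choose j : ℝ) * ((k : ℝ) ^ 2 * (N / (N + 1)) ^ k))
      (N ^ j * (N + 1) * ((N + 1) ^ 2 * j ^ 2 + 3 * N * (N + 1) * j + N * (2 * N + 1))) := by
    convert! hasSum_choose_mul_natCast_mul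
      (hasSum_choose_mul_natCast_mul_div_add_one_pow hN.le) j using 1
    · funext k; ring
    · push_cast; ring
  have ha : HasSum
      (fun j : ℕ ↦ ((N + 1) ^ 2 * j ^ 2 + 3 * N * (N + 1) * j + N * (2 * N + 1)) * z ^ j / j !)
      (((N + 1) ^ 2 * (z ^ 2 + z) + 3 * N * (N + 1) * z + N * (2 * N + 1)) * Real.exp z) := by
    convert! (((hasSum_descFactorial_mul_pow_div_factorial 2 z).mul_left ((N + 1) ^ 2)).add
      ((hasSum_descFactorial_mul_pow_div_factorial 1 z).mul_left
        ((N + 1) ^ 2 + 3 * N * (N + 1)))).add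
      ((hasSum_descFactorial_mul_pow_div_factorial 0 z).mul_left (N * (2 * N + 1))) using 1
    · funext j
      simp only [cast_descFactorial_two, descFactorial_one, descFactorial_zero]
      push_cast; ring
    · ring
  convert! hasSum_mul_Pdist θ hN (fun k ↦ sq_nonneg (k : ℝ)) hE ha using 1
  rw [mul_left_comm, ← Real.exp_add, neg_add_cancel, Real.exp_zero, mul_one, hz]
  field_simp
  ring

theorem Pdist_mean_variance (θ : ℂ) (N : ℝ) (hN : 0 < N) :
    (∑' k : ℕ, (k : ℝ) * Pdist θ N k = (‖θ‖) ^ 2 + N) ∧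
    (∑' k : ℕ, ((k : ℝ) - ((‖θ‖) ^ 2 + N)) ^ 2 * Pdist θ N k
        = N * (N + 1) + (‖θ‖) ^ 2 * (2 * N + 1)) := by
  have hmean := hasSum_natCast_mul_Pdist θ hN
  refine ⟨hmean.tsum_eq, ?_⟩
  rw [((hasSum_Pdist θ hN).sub_sq_mul hmean (hasSum_sq_mul_Pdist θ hN)).tsum_eq]
  ring
end

section
/- Let {p_w}_{w∈W} (W ⊂ ℝ an interval) be a one-parameter exponential family p_w(ω) = exp(X(ω)w − ψ(w)) on a countable set Ω, and fix C ∈ W and level α ∈ (0,1). Then there exist K ∈ ℝ and γ ∈ (0,1] such that the test function φ(ω) = 0 if X(ω) < K, γ if X(ω) = K, 1 if X(ω) > K satisfies E_{p_C}[φ] = α, and φ is uniformly most powerful of level α for testing H₀: w ≤ C vs H₁: w > C; i.e. for any other test function φ' : Ω → [0,1] with sup_{w≤C} E_{p_w}[φ'] ≤ α, we have E_{p_w}[φ'] ≤ E_{p_w}[φ] for all w > C. -/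
/-!
Since `p_C` is summable and bounded below on `X ⁻¹' [a, b]`, every bounded interval contains the
`X`-values of only finitely many points. Hence the tail mass `P_C(X > t)` jumps down to `< α` at
some value `K` of `X` with `P_C(X ≥ K) ≥ α`, and randomizing on `{X = K}` gives exact level `α`.
For `w > C` the likelihood ratio `p_w / p_C = exp ((w - C) X + ψ C - ψ w)` is increasing in `X`,
so the threshold test rejects exactly where `p_w > k p_C`, with `k` the ratio at `X = K`; the
Neyman–Pearson argument `∑ (φ - φ') (p_w - k p_C) ≥ 0` then compares powers.
-/

open Set Real

theorem summable_of_tsum_ne_zero {ι M : Type*} [AddCommMonoid M] [TopologicalSpace M] {f : ι → M}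
    (h : ∑' i, f i ≠ 0) : Summable f :=
  by_contra fun hf => h (tsum_eq_zero_of_not_summable hf)

section Masses

variable {Ω : Type*} {p : Ω → ℝ}

theorem tsum_indicator_mono (hp : 0 ≤ p) (hs : Summable p) {s t : Set Ω} (hst : s ⊆ t) :
    ∑' ω, s.indicator p ω ≤ ∑' ω, t.indicator p ω :=
  Summable.tsum_le_tsum (indicator_le_indicator_of_subset hst hp) (hs.indicator s) (hs.indicator t)

theorem sum_le_tsum_indicator (hp : 0 ≤ p) (hs : Summable p) {s : Set Ω} {F : Finset Ω}
    (hF : ↑F ⊆ s) : ∑ ω ∈ F, p ω ≤ ∑' ω, s.indicator p ω := by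
  rw [← Finset.sum_congr rfl fun ω hω => indicator_of_mem (hF hω) p]
  exact (hs.indicator s).sum_le_tsum F (fun ω _ => indicator_nonneg (fun ω _ => hp ω) ω)

theorem tsum_indicator_add_tsum_indicator_compl (hs : Summable p) (s : Set Ω) :
    ∑' ω, s.indicator p ω + ∑' ω, sᶜ.indicator p ω = ∑' ω, p ω := by
  rw [← (hs.indicator s).tsum_add (hs.indicator sᶜ)]
  exact tsum_congr fun ω => indicator_self_add_compl_apply s p ω

theorem exists_nonempty_finset_lt_sum (hs : HasSum p 1) {a : ℝ} (ha₀ : 0 ≤ a) (ha₁ : a < 1) :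
    ∃ F : Finset Ω, F.Nonempty ∧ a < ∑ ω ∈ F, p ω := by
  obtain ⟨F, hF⟩ := (hs.eventually (eventually_gt_nhds ha₁)).exists
  refine ⟨F, Finset.nonempty_iff_ne_empty.2 fun hF₀ => ?_, hF⟩
  simp only [hF₀, Finset.sum_empty] at hF
  linarith

variable {X : Ω → ℝ}

theorem exists_tsum_indicator_Ioi_lt (hp : 0 ≤ p) (hs : HasSum p 1) {α : ℝ} (hα₀ : 0 < α)
    (hα₁ : α ≤ 1) : ∃ t, ∑' ω, (X ⁻¹' Ioi t).indicator p ω < α := by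
  obtain ⟨F, hF, hsum⟩ := exists_nonempty_finset_lt_sum hs (sub_nonneg.2 hα₁) (sub_lt_self 1 hα₀)
  refine ⟨F.sup' hF X, ?_⟩
  have hF_le : ∑ ω ∈ F, p ω ≤ ∑' ω, (X ⁻¹' Ioi (F.sup' hF X))ᶜ.indicator p ω :=
    sum_le_tsum_indicator hp hs.summable fun ω hω => not_lt.2 (F.le_sup' X hω)
  have := tsum_indicator_add_tsum_indicator_compl hs.summable (X ⁻¹' Ioi (F.sup' hF X))
  rw [hs.tsum_eq] at this
  linarith

theorem exists_le_tsum_indicator_Ici (hp : 0 ≤ p) (hs : HasSum p 1) {α : ℝ} (hα₀ : 0 ≤ α)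
    (hα₁ : α < 1) : ∃ ω₀, α ≤ ∑' ω, (X ⁻¹' Ici (X ω₀)).indicator p ω := by
  obtain ⟨F, hF, hsum⟩ := exists_nonempty_finset_lt_sum hs hα₀ hα₁
  obtain ⟨ω₀, -, hω₀⟩ := F.exists_min_image X hF
  exact ⟨ω₀, hsum.le.trans (sum_le_tsum_indicator hp hs.summable fun ω hω => hω₀ ω hω)⟩

theorem exists_min_image_Ioi (hX : ∀ a b, (X ⁻¹' Icc a b).Finite) {K : ℝ} {ω₁ : Ω}
    (hω₁ : K < X ω₁) : ∃ ω₂, K < X ω₂ ∧ ∀ ω, K < X ω → X ω₂ ≤ X ω := by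
  obtain ⟨ω₂, hω₂, hmin⟩ := exists_min_image (X ⁻¹' Ioc K (X ω₁)) X
    ((hX K (X ω₁)).subset fun ω hω => Ioc_subset_Icc_self hω) ⟨ω₁, hω₁, le_rfl⟩
  refine ⟨ω₂, hω₂.1, fun ω hω => ?_⟩
  rcases le_or_gt (X ω) (X ω₁) with h | h
  · exact hmin ω ⟨hω, h⟩
  · exact hω₂.2.trans h.le

/-- Local finiteness makes the first inequality strict: the mass of `X > K` is that of
`X ≥ x₂` for the next value `x₂` of `X` above `K`, and `K` is the largest admissible value. -/
theorem exists_tsum_indicator_Ioi_lt_le_tsum_indicator_Ici (hp : 0 ≤ p) (hs : HasSum p 1)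
    (hX : ∀ a b, (X ⁻¹' Icc a b).Finite) {α : ℝ} (hα₀ : 0 < α) (hα₁ : α < 1) :
    ∃ K, ∑' ω, (X ⁻¹' Ioi K).indicator p ω < α ∧ α ≤ ∑' ω, (X ⁻¹' Ici K).indicator p ω := by
  obtain ⟨t, ht⟩ := exists_tsum_indicator_Ioi_lt (X := X) hp hs hα₀ hα₁.le
  obtain ⟨ω₀, hω₀⟩ := exists_le_tsum_indicator_Ici (X := X) hp hs hα₀.le hα₁
  set V := {ω | X ω₀ ≤ X ω ∧ α ≤ ∑' ω', (X ⁻¹' Ici (X ω)).indicator p ω'}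
  have hV : V ⊆ X ⁻¹' Icc (X ω₀) t := fun ω hω => ⟨hω.1, not_lt.1 fun hlt =>
    (hω.2.trans (tsum_indicator_mono hp hs.summable fun ω' h => hlt.trans_le h)).not_gt ht⟩
  obtain ⟨ωK, hωK, hmax⟩ := exists_max_image V X ((hX _ _).subset hV) ⟨ω₀, le_rfl, hω₀⟩
  refine ⟨X ωK, not_le.1 fun hle => ?_, hωK.2⟩
  obtain ⟨ω₁, hω₁⟩ : ∃ ω₁, X ωK < X ω₁ := by
    by_contra! hempty
    have : X ⁻¹' Ioi (X ωK) = ∅ := eq_empty_of_forall_notMem fun ω hω => (hempty ω).not_gt hω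
    simp only [this, indicator_empty, tsum_zero] at hle
    linarith
  obtain ⟨ω₂, hω₂, hmin⟩ := exists_min_image_Ioi hX hω₁
  have hω₂V : ω₂ ∈ V := ⟨hωK.1.trans hω₂.le,
    hle.trans (tsum_indicator_mono hp hs.summable fun ω hω => hmin ω hω)⟩
  exact (hmax ω₂ hω₂V).not_gt hω₂

end Masses

section ThresholdTest

variable {Ω : Type*} {p : Ω → ℝ} {X : Ω → ℝ}

noncomputable def thresholdTest (X : Ω → ℝ) (K γ : ℝ) (ω : Ω) : ℝ :=
  if X ω < K then 0 else if X ω = K then γ else 1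

theorem thresholdTest_mem_Icc {K γ : ℝ} (hγ : γ ∈ Icc (0 : ℝ) 1) (ω : Ω) :
    thresholdTest X K γ ω ∈ Icc (0 : ℝ) 1 := by
  unfold thresholdTest
  split_ifs
  exacts [⟨le_rfl, zero_le_one⟩, hγ, ⟨zero_le_one, le_rfl⟩]

theorem thresholdTest_of_lt {K γ : ℝ} {ω : Ω} (h : X ω < K) : thresholdTest X K γ ω = 0 :=
  if_pos h

theorem thresholdTest_of_gt {K γ : ℝ} {ω : Ω} (h : K < X ω) : thresholdTest X K γ ω = 1 := by
  rw [thresholdTest, if_neg h.not_gt, if_neg h.ne']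

theorem thresholdTest_mul_eq (K γ : ℝ) (ω : Ω) :
    thresholdTest X K γ ω * p ω =
      (X ⁻¹' Ioi K).indicator p ω + γ * (X ⁻¹' {K}).indicator p ω := by
  rcases lt_trichotomy (X ω) K with h | h | h
  · simp [thresholdTest_of_lt h, h.ne, h.not_gt]
  · simp [thresholdTest, h]
  · simp [thresholdTest_of_gt h, h, h.ne']

theorem exists_thresholdTest_tsum_mul_eq (hp : 0 ≤ p) (hs : HasSum p 1)
    (hX : ∀ a b, (X ⁻¹' Icc a b).Finite) {α : ℝ} (hα₀ : 0 < α) (hα₁ : α < 1) :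
    ∃ K γ, γ ∈ Ioc (0 : ℝ) 1 ∧ ∑' ω, thresholdTest X K γ ω * p ω = α := by
  obtain ⟨K, hlt, hle⟩ := exists_tsum_indicator_Ioi_lt_le_tsum_indicator_Ici hp hs hX hα₀ hα₁
  set A := ∑' ω, (X ⁻¹' Ioi K).indicator p ω
  set B := ∑' ω, (X ⁻¹' {K}).indicator p ω
  have hdisj : Disjoint (X ⁻¹' Ioi K) (X ⁻¹' {K}) :=
    (disjoint_singleton_right.2 (lt_irrefl K) : Disjoint (Ioi K) {K}).preimage X
  have hAB : ∑' ω, (X ⁻¹' Ici K).indicator p ω = A + B := by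
    rw [← Ioi_insert, ← union_singleton, preimage_union, indicator_union_of_disjoint hdisj,
      (hs.summable.indicator _).tsum_add (hs.summable.indicator _)]
  have hB : 0 < B := by linarith
  refine ⟨K, (α - A) / B, ⟨div_pos (by linarith) hB, (div_le_one hB).2 (by linarith)⟩, ?_⟩
  simp_rw [thresholdTest_mul_eq]
  rw [(hs.summable.indicator _).tsum_add ((hs.summable.indicator _).mul_left _), tsum_mul_left,
    div_mul_cancel₀ _ hB.ne']
  ring

end ThresholdTest

section NeymanPearson

variable {Ω : Type*} {p q φ φ' : Ω → ℝ}

theorem summable_mul_of_mem_Icc (hφ : ∀ ω, φ ω ∈ Icc (0 : ℝ) 1) (hq₀ : 0 ≤ q) (hq : Summable q) :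
    Summable fun ω => φ ω * q ω :=
  hq.of_nonneg_of_le (fun ω => mul_nonneg (hφ ω).1 (hq₀ ω))
    (fun ω => mul_le_of_le_one_left (hq₀ ω) (hφ ω).2)

theorem tsum_mul_le_of_likelihoodRatioTest {k : ℝ} (hk : 0 ≤ k) (hp₀ : 0 ≤ p) (hq₀ : 0 ≤ q)
    (hp : Summable p) (hq : Summable q) (hφ : ∀ ω, φ ω ∈ Icc (0 : ℝ) 1)
    (hφ' : ∀ ω, φ' ω ∈ Icc (0 : ℝ) 1) (h_one : ∀ ω, k * p ω < q ω → φ ω = 1)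
    (h_zero : ∀ ω, q ω < k * p ω → φ ω = 0)
    (hlevel : ∑' ω, φ' ω * p ω ≤ ∑' ω, φ ω * p ω) :
    ∑' ω, φ' ω * q ω ≤ ∑' ω, φ ω * q ω := by
  have hsign : ∀ ω, 0 ≤ (φ ω - φ' ω) * (q ω - k * p ω) := fun ω => by
    rcases lt_trichotomy (k * p ω) (q ω) with h | h | h
    · rw [h_one ω h]
      exact mul_nonneg (sub_nonneg.2 (hφ' ω).2) (sub_nonneg.2 h.le)
    · rw [h, sub_self, mul_zero]
    · rw [h_zero ω h]
      exact mul_nonneg_of_nonpos_of_nonpos (by linarith [(hφ' ω).1]) (sub_nonpos.2 h.le)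
  have hφ'q := summable_mul_of_mem_Icc hφ' hq₀ hq
  have hφq := summable_mul_of_mem_Icc hφ hq₀ hq
  have hφ'p := (summable_mul_of_mem_Icc hφ' hp₀ hp).mul_left k
  have hφp := (summable_mul_of_mem_Icc hφ hp₀ hp).mul_left k
  have hsum :=
    Summable.tsum_le_tsum (fun ω => by nlinarith [hsign ω]) (hφ'q.add hφp) (hφq.add hφ'p)
  rw [hφ'q.tsum_add hφp, hφq.tsum_add hφ'p, tsum_mul_left, tsum_mul_left] at hsum
  linarith [mul_le_mul_of_nonneg_left hlevel hk]

end NeymanPearson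

section ExponentialFamily

variable {Ω : Type*} {X : Ω → ℝ} {ψ : ℝ → ℝ} {C : ℝ}

theorem finite_preimage_Icc_of_summable_exp (hs : Summable fun ω => exp (X ω * C - ψ C))
    (a b : ℝ) : (X ⁻¹' Icc a b).Finite := by
  have hε : 0 < exp (min (a * C) (b * C) - ψ C) := exp_pos _
  refine (Filter.eventually_cofinite.1 (hs.tendsto_cofinite_zero.eventually
    (eventually_lt_nhds hε))).subset fun ω hω => not_lt.2 (exp_le_exp.2 ?_)
  have : min (a * C) (b * C) ≤ X ω * C := by
    rcases le_total 0 C with hC | hC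
    · exact min_le_of_left_le (mul_le_mul_of_nonneg_right hω.1 hC)
    · exact min_le_of_right_le (mul_le_mul_of_nonpos_right hω.2 hC)
  linarith

theorem exp_mul_exp_lt_exp_iff {w K x : ℝ} (hCw : C < w) :
    exp (K * (w - C) + ψ C - ψ w) * exp (x * C - ψ C) < exp (x * w - ψ w) ↔ K < x := by
  rw [← exp_add, exp_lt_exp]
  constructor <;> intro h <;> nlinarith

theorem exp_lt_exp_mul_exp_iff {w K x : ℝ} (hCw : C < w) :
    exp (x * w - ψ w) < exp (K * (w - C) + ψ C - ψ w) * exp (x * C - ψ C) ↔ x < K := by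
  rw [← exp_add, exp_lt_exp]
  constructor <;> intro h <;> nlinarith

end ExponentialFamily

theorem ump_one_parameter_exponential_family_general
    {Ω : Type*} (X : Ω → ℝ) (ψ : ℝ → ℝ) (W : Set ℝ)
    (hprob : ∀ w ∈ W, ∑' ω : Ω, Real.exp (X ω * w - ψ w) = 1)
    (C : ℝ) (hC : C ∈ W) (α : ℝ) (hα : α ∈ Set.Ioo (0:ℝ) 1) :
    ∃ (K : ℝ) (γ : ℝ), γ ∈ Set.Ioc (0:ℝ) 1 ∧
      (∑' ω : Ω, (if X ω < K then (0:ℝ) else if X ω = K then γ else 1) *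
          Real.exp (X ω * C - ψ C)) = α ∧
      ∀ φ' : Ω → ℝ, (∀ ω, φ' ω ∈ Set.Icc (0:ℝ) 1) →
        (∀ w ∈ W, w ≤ C → ∑' ω : Ω, φ' ω * Real.exp (X ω * w - ψ w) ≤ α) →
        ∀ w ∈ W, C < w →
          ∑' ω : Ω, φ' ω * Real.exp (X ω * w - ψ w) ≤
            ∑' ω : Ω, (if X ω < K then (0:ℝ) else if X ω = K then γ else 1) *
              Real.exp (X ω * w - ψ w) := by
  have hsum : ∀ w ∈ W, Summable fun ω => exp (X ω * w - ψ w) := fun w hw =>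
    summable_of_tsum_ne_zero (by rw [hprob w hw]; exact one_ne_zero)
  obtain ⟨K, γ, hγ, hlevel⟩ := exists_thresholdTest_tsum_mul_eq (fun ω => (exp_pos _).le)
    ((hsum C hC).hasSum_iff.2 (hprob C hC)) (finite_preimage_Icc_of_summable_exp (hsum C hC))
    hα.1 hα.2
  refine ⟨K, γ, hγ, hlevel, fun φ' hφ' hlevel' w hw hCw => ?_⟩
  exact tsum_mul_le_of_likelihoodRatioTest (exp_pos (K * (w - C) + ψ C - ψ w)).le
    (fun ω => (exp_pos _).le) (fun ω => (exp_pos _).le) (hsum C hC) (hsum w hw)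
    (thresholdTest_mem_Icc (Ioc_subset_Icc_self hγ)) hφ'
    (fun ω h => thresholdTest_of_gt ((exp_mul_exp_lt_exp_iff hCw).1 h))
    (fun ω h => thresholdTest_of_lt ((exp_lt_exp_mul_exp_iff hCw).1 h))
    (hlevel.symm ▸ hlevel' C hC le_rfl)

/-- UMP test for a one-sided hypothesis in a one-parameter exponential family
(Theorem 4.1 / Lehmann): existence of a threshold test with randomization that has
exact level α and is uniformly most powerful. -/
theorem ump_one_parameter_exponential_family
    {Ω : Type*} [Countable Ω] (X : Ω → ℝ) (ψ : ℝ → ℝ) (W : Set ℝ) (hW : W.OrdConnected)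
    (hprob : ∀ w ∈ W, ∑' ω : Ω, Real.exp (X ω * w - ψ w) = 1)
    (C : ℝ) (hC : C ∈ W) (α : ℝ) (hα : α ∈ Set.Ioo (0:ℝ) 1) :
    ∃ (K : ℝ) (γ : ℝ), γ ∈ Set.Ioc (0:ℝ) 1 ∧
      (∑' ω : Ω, (if X ω < K then (0:ℝ) else if X ω = K then γ else 1) *
          Real.exp (X ω * C - ψ C)) = α ∧
      ∀ φ' : Ω → ℝ, (∀ ω, φ' ω ∈ Set.Icc (0:ℝ) 1) →
        (∀ w ∈ W, w ≤ C → ∑' ω : Ω, φ' ω * Real.exp (X ω * w - ψ w) ≤ α) →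
        ∀ w ∈ W, C < w →
          ∑' ω : Ω, φ' ω * Real.exp (X ω * w - ψ w) ≤
            ∑' ω : Ω, (if X ω < K then (0:ℝ) else if X ω = K then γ else 1) *
              Real.exp (X ω * w - ψ w) :=
  ump_one_parameter_exponential_family_general X ψ W hprob C hC α hα
end
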